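/- Let u, v be hermitian functionals not in Δ and let L, M be Laurent polynomials with (z^p L_*, z^p M_*) = (L, M) for some p ∈ ℤ and u·L = v·M, with associated C such that F·L = G·M + C. Then the rational modification u·L = v·M is minimal if and only if gcd(L, M, C) = 1 in the Laurent polynomial ring. -/

import Mathlib

open LaurentPolynomial Complex Polynomial

noncomputable section

abbrev LP := LaurentPolynomial ℂ
abbrev Func := LP →ₗ[ℂ] ℂ

/-- The coefficients of a Laurent polynomial, as a finitely supported function on `ℤ`. -/
def coeF (L : LP) : ℤ →₀ ℂ := L.coeff

/-- The modified functional `u·L`, defined by `(u·L)[f] = u[L·f]`. -/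
def smulF (u : Func) (L : LP) : Func := u ∘ₗ LinearMap.mulLeft ℂ L

/-- The moments `μ_n = u[zⁿ]`. -/
def moment (u : Func) (n : ℤ) : ℂ := u (T n)

/-- A functional is hermitian if `μ_{-n} = conj μ_n`. -/
def IsHermitian (u : Func) : Prop := ∀ n : ℤ, moment u (-n) = (starRingEnd ℂ) (moment u n)

/-- The Carathéodory formal series `F(z) = μ₀ + 2 Σ_{n≥1} μ_{-n} zⁿ`, as coefficients. -/
def CS (u : Func) : ℤ → ℂ := fun n => if n = 0 then moment u 0 else if 0 < n then 2 * moment u (-n) else 0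

/-- The Laurent formal series `L[u](z) = Σ_{n∈ℤ} μ_{-n} zⁿ`, as coefficients. -/
def LS (u : Func) : ℤ → ℂ := fun n => moment u (-n)

/-- `H_*(z) = conj (H (1/conj z))`, coefficient-wise. -/
def starS (H : ℤ → ℂ) : ℤ → ℂ := fun n => (starRingEnd ℂ) (H (-n))

/-- Product of a formal doubly-infinite series with a Laurent polynomial. -/
def mulS (H : ℤ → ℂ) (L : LP) : ℤ → ℂ := fun n => (coeF L).sum fun k c => c * H (n - k)

/-- The `*` operation on Laurent polynomials: `L_*(z) = conj (L (1/conj z))`. -/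
def starLP (L : LP) : LP :=
  AddMonoidAlgebra.ofCoeff (Finsupp.equivMapDomain (Equiv.neg ℤ)
    (Finsupp.mapRange (starRingEnd ℂ) (map_zero _) (coeF L)) : ℤ →₀ ℂ)

/-- A Laurent polynomial as a formal series. -/
def polyS (N : LP) : ℤ → ℂ := fun n => coeF N n

/-- The Lebesgue functional `leb[zⁿ] = δ_{n,0}`. -/
def lebF : Func := (Finsupp.lapply (0 : ℤ) : (ℤ →₀ ℂ) →ₗ[ℂ] ℂ) ∘ₗ
  (AddMonoidAlgebra.coeffLinearEquiv ℂ : LP ≃ₗ[ℂ] (ℤ →₀ ℂ)).toLinearMap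

/-- The Dirac delta at `z = 1`: evaluation at `1`. -/
def delta1 : Func := (Finsupp.lsum ℂ (fun _ : ℤ => (LinearMap.id : ℂ →ₗ[ℂ] ℂ)) : (ℤ →₀ ℂ) →ₗ[ℂ] ℂ) ∘ₗ
  (AddMonoidAlgebra.coeffLinearEquiv ℂ : LP ≃ₗ[ℂ] (ℤ →₀ ℂ)).toLinearMap

/-- `P* (z) = z^q conj(P(1/conj z))` with `q` given: conjugate coefficients and reflect at `q`. -/
def starDeg (q : ℕ) (P : Polynomial ℂ) : Polynomial ℂ := Polynomial.reflect q (P.map (starRingEnd ℂ))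

/-- The class `Δ` of hermitian functionals annihilated by a nonzero Laurent polynomial. -/
def InDelta (u : Func) : Prop := IsHermitian u ∧ ∃ N : LP, N ≠ 0 ∧ smulF u N = 0

/-!
For hermitian `u, v` the moments satisfy `2·L[u] = F + F_*`, so with `R(A, B) = F·A − G·B`
one has `2 (L[u]·A − L[v]·B) = R(A, B) + R(A_*, B_*)_*`: the relation `u·A = v·B` says exactly
that `R(A, B) = −R(A_*, B_*)_*`. A nonzero Laurent polynomial acts injectively on series whose
support is bounded below, so a common factor `D` of `L, M, C` can be cancelled from `(L, M)`
keeping the relation, and minimality forces `D` to be a unit. Conversely, for another pair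
`(L₁, M₁)` one gets `L·M₁ = L₁·M` since `u ∉ Δ`; reducing the fraction `L₁/L` by a Bézout gcd
`g` gives `L = d·g`, `M = d·M₂` with `u·g = v·M₂`. Then `R(g, M₂)` has support bounded on both
sides, so it is a Laurent polynomial `X`, and `C = d·X` makes `d` a unit.
-/

open Function

def starLPRingHom : LP →+* LP :=
  (invert : LP ≃ₐ[ℂ] LP).toRingEquiv.toRingHom.comp
    (AddMonoidAlgebra.mapRingHom ℤ (starRingEnd ℂ))

lemma coeF_starLP (L : LP) (n : ℤ) : coeF (starLP L) n = starRingEnd ℂ (coeF L (-n)) := rfl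

lemma coe_starLPRingHom : ⇑starLPRingHom = starLP := by
  ext L n
  simp only [starLPRingHom, RingEquiv.toRingHom_eq_coe, AlgEquiv.toRingEquiv_toRingHom,
    RingHom.coe_comp, RingHom.coe_coe, comp_apply, invert_apply,
    AddMonoidAlgebra.coeff_mapRingHom]
  rfl

lemma starLP_add (A B : LP) : starLP (A + B) = starLP A + starLP B := by
  rw [← coe_starLPRingHom, map_add]

lemma starLP_mul (A B : LP) : starLP (A * B) = starLP A * starLP B := by
  rw [← coe_starLPRingHom, map_mul]

lemma starLP_neg (A : LP) : starLP (-A) = -starLP A := by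
  rw [← coe_starLPRingHom, map_neg]

lemma starLP_starLP (L : LP) : starLP (starLP L) = L := by
  ext n
  exact (coeF_starLP _ n).trans (by rw [coeF_starLP, neg_neg, Complex.conj_conj]; rfl)

lemma starLP_ne_zero {L : LP} (h : L ≠ 0) : starLP L ≠ 0 := fun h0 =>
  h (by rw [← starLP_starLP L, h0, ← coe_starLPRingHom, map_zero])

lemma starLP_single (k : ℤ) (c : ℂ) :
    starLP (AddMonoidAlgebra.single k c) = AddMonoidAlgebra.single (-k) (starRingEnd ℂ c) := by
  ext n
  rw [← coeF, coeF_starLP]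
  simp only [coeF, AddMonoidAlgebra.coeff_single, Finsupp.single_apply, neg_eq_iff_eq_neg]
  split_ifs <;> simp

lemma mulS_apply (H : ℤ → ℂ) (L : LP) (n : ℤ) :
    mulS H L n = ∑ k ∈ (coeF L).support, coeF L k * H (n - k) := rfl

@[simp] lemma mulS_zero (H : ℤ → ℂ) : mulS H 0 = 0 := by
  ext n; simp [mulS, coeF]

@[simp] lemma zero_mulS (L : LP) : mulS 0 L = 0 := by
  ext n; simp [mulS_apply]

lemma mulS_add (H : ℤ → ℂ) (A B : LP) : mulS H (A + B) = mulS H A + mulS H B := by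
  ext n
  exact Finsupp.sum_add_index' (fun _ => zero_mul _) (fun _ _ _ => add_mul _ _ _)

lemma add_mulS (H₁ H₂ : ℤ → ℂ) (L : LP) : mulS (H₁ + H₂) L = mulS H₁ L + mulS H₂ L := by
  ext n
  simp only [mulS_apply, Pi.add_apply, mul_add, Finset.sum_add_distrib]

lemma sub_mulS (H₁ H₂ : ℤ → ℂ) (L : LP) : mulS (H₁ - H₂) L = mulS H₁ L - mulS H₂ L := by
  ext n
  simp only [mulS_apply, Pi.sub_apply, mul_sub, Finset.sum_sub_distrib]

lemma smul_mulS (c : ℂ) (H : ℤ → ℂ) (L : LP) : mulS (c • H) L = c • mulS H L := by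
  ext n
  simp only [mulS_apply, Pi.smul_apply, smul_eq_mul, Finset.mul_sum, mul_left_comm]

lemma mulS_single (H : ℤ → ℂ) (k : ℤ) (c : ℂ) :
    mulS H (AddMonoidAlgebra.single k c) = fun n => c * H (n - k) := by
  ext n
  exact Finsupp.sum_single_index (zero_mul _)

lemma mulS_mul (H : ℤ → ℂ) (A B : LP) : mulS H (A * B) = mulS (mulS H B) A := by
  induction A using AddMonoidAlgebra.induction_linear with
  | zero => simp
  | add A₁ A₂ h₁ h₂ => rw [add_mul, mulS_add, mulS_add, h₁, h₂]
  | single a c =>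
    induction B using AddMonoidAlgebra.induction_linear with
    | zero => simp
    | add B₁ B₂ h₁ h₂ => rw [mul_add, mulS_add, h₁, h₂, mulS_add, add_mulS]
    | single b d =>
      rw [AddMonoidAlgebra.single_mul_single, mulS_single, mulS_single, mulS_single]
      ext n
      simp only
      ring_nf

lemma mulS_starS (H : ℤ → ℂ) (L : LP) : mulS (starS H) L = starS (mulS H (starLP L)) := by
  induction L using AddMonoidAlgebra.induction_linear with
  | zero => rw [← coe_starLPRingHom, map_zero]; ext; simp [starS]
  | add A B hA hB => rw [mulS_add, hA, hB, starLP_add, mulS_add]; ext; simp [starS]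
  | single k c =>
    ext n
    rw [starLP_single, mulS_single, mulS_single]
    simp only [starS, map_mul, conj_conj]
    ring_nf

lemma polyS_injective : Function.Injective polyS :=
  fun _ _ h => LaurentPolynomial.ext (congrFun h)

lemma polyS_neg (X : LP) : polyS (-X) = -polyS X := rfl

lemma starS_polyS (B : LP) : starS (polyS B) = polyS (starLP B) := rfl

lemma mulS_polyS (A B : LP) : mulS (polyS B) A = polyS (A * B) := by
  ext n
  simp only [polyS, mulS, coeF, AddMonoidAlgebra.coeff_mul_apply_left, neg_add_eq_sub]

lemma smulF_apply (u : Func) (L f : LP) : smulF u L f = u (L * f) := rfl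

lemma smulF_add (u : Func) (A B : LP) : smulF u (A + B) = smulF u A + smulF u B := by
  ext f; simp [smulF, add_mul]

lemma smulF_sub (u : Func) (A B : LP) : smulF u (A - B) = smulF u A - smulF u B := by
  ext f; simp [smulF, sub_mul]

lemma smulF_mul (u : Func) (A B : LP) : smulF u (A * B) = smulF (smulF u A) B := by
  ext f; simp [smulF]

lemma mulS_LS (u : Func) (A : LP) (n : ℤ) : mulS (LS u) A n = smulF u A (T (-n)) := by
  induction A using AddMonoidAlgebra.induction_linear with
  | zero => simp [smulF]
  | add A₁ A₂ h₁ h₂ => rw [mulS_add, smulF_add, Pi.add_apply, h₁, h₂, LinearMap.add_apply]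
  | single a c =>
    have hT : (AddMonoidAlgebra.single a c : LP) * T (-n) = c • T (-(n - a)) := by
      rw [T, T, AddMonoidAlgebra.single_mul_single, AddMonoidAlgebra.smul_single, mul_one,
        smul_eq_mul, mul_one, neg_sub, sub_eq_add_neg]
    rw [mulS_single, smulF_apply, hT, map_smul, smul_eq_mul]
    rfl

lemma smulF_eq_smulF_iff (u v : Func) (A B : LP) :
    smulF u A = smulF v B ↔ mulS (LS u) A = mulS (LS v) B := by
  refine ⟨fun h => funext fun n => by rw [mulS_LS, mulS_LS, h], fun h => ?_⟩
  ext m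
  simpa [mulS_LS] using congrFun h (-m)

lemma bddBelow_support_CS (u : Func) : BddBelow (support (CS u)) := by
  refine ⟨0, fun n hn => ?_⟩
  by_contra h
  exact hn (by simp only [CS]; rw [if_neg (by omega), if_neg (by omega)])

lemma bddBelow_support_polyS (B : LP) : BddBelow (support (polyS B)) :=
  (coeF B).hasFiniteSupport.bddBelow

lemma BddBelow.support_sub {α G : Type*} [LinearOrder α] [AddGroup G] {H₁ H₂ : α → G}
    (h₁ : BddBelow (support H₁)) (h₂ : BddBelow (support H₂)) : BddBelow (support (H₁ - H₂)) :=
  (h₁.union h₂).mono (Function.support_sub H₁ H₂)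

lemma BddBelow.support_mulS {H : ℤ → ℂ} (hH : BddBelow (support H)) (L : LP) :
    BddBelow (support (mulS H L)) := by
  obtain ⟨N, hN⟩ := hH
  obtain ⟨B, hB⟩ := (coeF L).hasFiniteSupport.bddBelow
  refine ⟨N + B, fun n hn => ?_⟩
  obtain ⟨k, hk, hkn⟩ := Finset.exists_ne_zero_of_sum_ne_zero hn
  have h1 : N ≤ n - k := hN (right_ne_zero_of_mul hkn)
  have h2 : B ≤ k := hB (left_ne_zero_of_mul hkn)
  omega

lemma BddBelow.support_starS {H : ℤ → ℂ} (hH : BddBelow (support H)) :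
    BddAbove (support (starS H)) := by
  obtain ⟨N, hN⟩ := hH
  refine ⟨-N, fun n hn => ?_⟩
  have : N ≤ -n := hN fun h => hn (by simp [starS, h])
  omega

lemma exists_polyS_eq {H : ℤ → ℂ} (hH : (support H).Finite) : ∃ X : LP, polyS X = H :=
  ⟨AddMonoidAlgebra.ofCoeff (Finsupp.ofSupportFinite H hH), Finsupp.ofSupportFinite_coe⟩

-- The lowest-order terms of `R` and `P` cannot cancel in `mulS R P`.
lemma eq_zero_of_mulS_eq_zero {P : LP} (hP : P ≠ 0) {R : ℤ → ℂ} (hR : BddBelow (support R))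
    (h : mulS R P = 0) : R = 0 := by
  by_contra hR0
  obtain ⟨n₀, hn₀, hlow⟩ := Int.exists_least_of_bdd hR (Function.ne_iff.mp hR0)
  have hsupp : (coeF P).support.Nonempty :=
    Finsupp.support_nonempty_iff.mpr fun h => hP (LaurentPolynomial.ext (DFunLike.congr_fun h))
  set k₀ := (coeF P).support.min' hsupp
  have hk₀ : coeF P k₀ ≠ 0 := Finsupp.mem_support_iff.mp ((coeF P).support.min'_mem hsupp)
  have hterm : mulS R P (n₀ + k₀) = coeF P k₀ * R n₀ := by
    rw [mulS_apply, Finset.sum_eq_single k₀ (fun k hk hne => ?_) (fun h => absurd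
      ((coeF P).support.min'_mem hsupp) h), add_sub_cancel_right]
    have : k₀ < k := lt_of_le_of_ne ((coeF P).support.min'_le k hk) (Ne.symm hne)
    have hRk : R (n₀ + k₀ - k) = 0 := by
      by_contra hRk
      have := hlow _ hRk
      omega
    rw [hRk, mul_zero]
  exact mul_ne_zero hk₀ hn₀ (hterm ▸ congrFun h (n₀ + k₀))

lemma eq_of_mulS_eq {P : LP} (hP : P ≠ 0) {R₁ R₂ : ℤ → ℂ} (h₁ : BddBelow (support R₁))
    (h₂ : BddBelow (support R₂)) (h : mulS R₁ P = mulS R₂ P) : R₁ = R₂ :=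
  sub_eq_zero.mp <| eq_zero_of_mulS_eq_zero hP (h₁.support_sub h₂) (by rw [sub_mulS, h, sub_self])

lemma starS_sub (H₁ H₂ : ℤ → ℂ) : starS (H₁ - H₂) = starS H₁ - starS H₂ := by
  ext n; simp [starS]

lemma starS_neg (H : ℤ → ℂ) : starS (-H) = -starS H := by
  ext n; simp [starS]

lemma starS_starS (H : ℤ → ℂ) : starS (starS H) = H := by
  ext n; simp [starS]

lemma two_smul_LS {u : Func} (hu : IsHermitian u) : (2 : ℂ) • LS u = CS u + starS (CS u) := by
  ext n
  have h0 : moment u 0 = starRingEnd ℂ (moment u 0) := by simpa using hu 0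
  simp only [LS, CS, starS, Pi.smul_apply, Pi.add_apply, smul_eq_mul, neg_eq_zero,
    Left.neg_pos_iff, neg_neg]
  rcases lt_trichotomy n 0 with hn | rfl | hn
  · simp [hn.ne, hn.not_gt, hn, hu n, Complex.conj_ofNat]
  · simp only [if_true, neg_zero, ← h0]; ring
  · simp [hn.ne', hn, hn.not_gt]

-- `remS u v L M` is the series of `C` in the statement.
def remS (u v : Func) (A B : LP) : ℤ → ℂ := mulS (CS u) A - mulS (CS v) B

lemma remS_mul (u v : Func) (D A B : LP) : remS u v (D * A) (D * B) = mulS (remS u v A B) D := by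
  rw [remS, remS, mulS_mul, mulS_mul, sub_mulS]

lemma bddBelow_support_remS (u v : Func) (A B : LP) :
    BddBelow (support (remS u v A B)) :=
  ((bddBelow_support_CS u).support_mulS A).support_sub ((bddBelow_support_CS v).support_mulS B)

lemma two_smul_mulS_LS_sub {u v : Func} (hu : IsHermitian u) (hv : IsHermitian v) (A B : LP) :
    (2 : ℂ) • (mulS (LS u) A - mulS (LS v) B) =
      remS u v A B + starS (remS u v (starLP A) (starLP B)) := by
  rw [smul_sub, ← smul_mulS, ← smul_mulS, two_smul_LS hu, two_smul_LS hv, add_mulS, add_mulS,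
    mulS_starS, mulS_starS, remS, remS, starS_sub]
  abel

lemma smulF_eq_smulF_iff_remS {u v : Func} (hu : IsHermitian u) (hv : IsHermitian v) (A B : LP) :
    smulF u A = smulF v B ↔ remS u v A B + starS (remS u v (starLP A) (starLP B)) = 0 := by
  rw [smulF_eq_smulF_iff, ← two_smul_mulS_LS_sub hu hv, smul_eq_zero, sub_eq_zero]
  simp

lemma exists_polyS_eq_remS {u v : Func} (hu : IsHermitian u) (hv : IsHermitian v) {A B : LP}
    (h : smulF u A = smulF v B) : ∃ X : LP, polyS X = remS u v A B := by
  refine exists_polyS_eq ((bddBelow_support_remS u v A B).finite_of_bddAbove ?_)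
  rw [eq_neg_of_add_eq_zero_left ((smulF_eq_smulF_iff_remS hu hv A B).mp h),
    Function.support_neg]
  exact (bddBelow_support_remS u v _ _).support_starS

lemma remS_starLP_of_smulF_eq {u v : Func} (hu : IsHermitian u) (hv : IsHermitian v) {A B : LP}
    (h : smulF u A = smulF v B) : remS u v (starLP A) (starLP B) = -starS (remS u v A B) := by
  rw [← starS_starS (remS u v (starLP A) (starLP B)),
    eq_neg_of_add_eq_zero_right ((smulF_eq_smulF_iff_remS hu hv A B).mp h), starS_neg]

lemma LaurentPolynomial.exists_bezout {K : Type*} [Field K] (A B : K[T;T⁻¹]) :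
    ∃ g x y : K[T;T⁻¹], g ∣ A ∧ g ∣ B ∧ x * A + y * B = g := by
  classical
  obtain ⟨m, α, hα⟩ := A.exists_T_pow
  obtain ⟨n, β, hβ⟩ := B.exists_T_pow
  refine ⟨toLaurent (EuclideanDomain.gcd α β), T m * toLaurent (EuclideanDomain.gcdA α β),
    T n * toLaurent (EuclideanDomain.gcdB α β), ?_, ?_, ?_⟩
  · rw [← (isUnit_T (m : ℤ)).dvd_mul_right, ← hα]
    exact map_dvd toLaurent (EuclideanDomain.gcd_dvd_left α β)
  · rw [← (isUnit_T (n : ℤ)).dvd_mul_right, ← hβ]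
    exact map_dvd toLaurent (EuclideanDomain.gcd_dvd_right α β)
  · rw [EuclideanDomain.gcd_eq_gcd_ab α β, map_add, map_mul, map_mul, hα, hβ]
    ring

lemma exists_reduced_fraction {R : Type*} [CommRing R] [IsDomain R] {A A₁ B B₁ g x y : R}
    (hA : A ≠ 0) (hgA : g ∣ A) (hgA₁ : g ∣ A₁) (hxy : x * A + y * A₁ = g)
    (h : A * B₁ = A₁ * B) :
    ∃ d a : R, A = d * g ∧ A₁ = a * g ∧
      B = d * (x * B + y * B₁) ∧ B₁ = a * (x * B + y * B₁) := by
  obtain ⟨d, rfl⟩ := hgA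
  obtain ⟨a, rfl⟩ := hgA₁
  have hg : g ≠ 0 := left_ne_zero_of_mul hA
  have hxy' : x * d + y * a = 1 := mul_left_cancel₀ hg (by linear_combination hxy)
  have h' : d * B₁ = a * B := mul_left_cancel₀ hg (by linear_combination h)
  exact ⟨d, a, mul_comm _ _, mul_comm _ _, by linear_combination (-B) * hxy' - y * h',
    by linear_combination (-B₁) * hxy' + x * h'⟩

lemma smulF_eq_smulF_of_mul_left {u v : Func} (hu : IsHermitian u) (hv : IsHermitian v)
    {D A B C₁ : LP} (hD : D ≠ 0) (h : smulF u (D * A) = smulF v (D * B))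
    (hC : remS u v (D * A) (D * B) = polyS (D * C₁)) : smulF u A = smulF v B := by
  have hAB : remS u v A B = polyS C₁ :=
    eq_of_mulS_eq hD (bddBelow_support_remS u v A B) (bddBelow_support_polyS C₁)
      (by rw [← remS_mul, hC, mulS_polyS])
  have hAB_star : remS u v (starLP A) (starLP B) = polyS (starLP (-C₁)) := by
    refine eq_of_mulS_eq (starLP_ne_zero hD) (bddBelow_support_remS u v _ _)
      (bddBelow_support_polyS _) ?_
    rw [← remS_mul, ← starLP_mul, ← starLP_mul, remS_starLP_of_smulF_eq hu hv h, hC,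
      starS_polyS, mulS_polyS, ← starLP_mul, mul_neg, starLP_neg, polyS_neg]
  rw [smulF_eq_smulF_iff_remS hu hv, hAB, hAB_star, starS_polyS, starLP_starLP, polyS_neg,
    add_neg_cancel]

lemma mul_eq_mul_of_smulF_eq {u v : Func} (hu : IsHermitian u) (hud : ¬ InDelta u)
    {L M L₁ M₁ : LP} (h : smulF u L = smulF v M) (h₁ : smulF u L₁ = smulF v M₁) :
    L * M₁ = L₁ * M := by
  by_contra hne
  refine hud ⟨hu, L * M₁ - L₁ * M, sub_ne_zero.mpr hne, ?_⟩
  rw [smulF_sub, smulF_mul, smulF_mul, h, h₁, ← smulF_mul, ← smulF_mul, mul_comm, sub_self]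

lemma exists_eq_mul_of_smulF_eq {u v : Func} (hu : IsHermitian u) (hv : IsHermitian v)
    (hud : ¬ InDelta u) {L M C : LP} (hL : L ≠ 0) (hLM : smulF u L = smulF v M)
    (hC : remS u v L M = polyS C) (hgcd : ∀ D : LP, D ∣ L → D ∣ M → D ∣ C → IsUnit D)
    {L₁ M₁ : LP} (h₁ : smulF u L₁ = smulF v M₁) : ∃ N : LP, L₁ = N * L ∧ M₁ = N * M := by
  obtain ⟨g, x, y, hgL, hgL₁, hxy⟩ := LaurentPolynomial.exists_bezout L L₁
  obtain ⟨d, a, hL', hL₁', hM', hM₁'⟩ :=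
    exists_reduced_fraction hL hgL hgL₁ hxy (mul_eq_mul_of_smulF_eq hu hud hLM h₁)
  set M₂ := x * M + y * M₁
  have hg : smulF u g = smulF v M₂ := by
    rw [← hxy, show M₂ = M * x + M₁ * y by ring, mul_comm x, mul_comm y, smulF_add, smulF_add,
      smulF_mul, smulF_mul, smulF_mul, smulF_mul, hLM, h₁]
  obtain ⟨X, hX⟩ := exists_polyS_eq_remS hu hv hg
  have hdC : C = d * X := polyS_injective <| by
    rw [← hC, hL', hM', remS_mul, ← hX, mulS_polyS]
  obtain ⟨e, he⟩ := (hgcd d ⟨g, hL'⟩ ⟨M₂, hM'⟩ ⟨X, hdC⟩).exists_left_inv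
  exact ⟨a * e, by rw [hL₁', hL']; linear_combination (-a * g) * he,
    by rw [hM₁', hM']; linear_combination (-a * M₂) * he⟩

theorem stmt11_general (u v : Func) (hu : IsHermitian u) (hv : IsHermitian v)
    (hud : ¬ InDelta u)
    (L M C : LP) (hL : L ≠ 0) (hM : M ≠ 0)
    (hRM : smulF u L = smulF v M)
    (hC : mulS (CS u) L = (fun n => mulS (CS v) M n + coeF C n)) :
    (∀ L₁ M₁ : LP, L₁ ≠ 0 → M₁ ≠ 0 → smulF u L₁ = smulF v M₁ →
      ∃ N : LP, L₁ = N * L ∧ M₁ = N * M) ↔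
    (∀ D : LP, D ∣ L → D ∣ M → D ∣ C → IsUnit D) := by
  have hC' : remS u v L M = polyS C := by
    rw [remS, hC]; ext n; simp [polyS]
  refine ⟨fun hmin D ⟨L₁, hL₁⟩ ⟨M₁, hM₁⟩ ⟨C₁, hC₁⟩ => ?_,
    fun hgcd L₁ M₁ _ _ h₁ => exists_eq_mul_of_smulF_eq hu hv hud hL hRM hC' hgcd h₁⟩
  have hD : D ≠ 0 := left_ne_zero_of_mul (hL₁ ▸ hL)
  subst hL₁ hM₁ hC₁
  obtain ⟨N, hN, -⟩ := hmin L₁ M₁ (right_ne_zero_of_mul hL) (right_ne_zero_of_mul hM)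
    (smulF_eq_smulF_of_mul_left hu hv hD hRM hC')
  exact IsUnit.of_mul_eq_one_right N
    (mul_right_cancel₀ (right_ne_zero_of_mul hL) (by rw [one_mul, mul_assoc, ← hN]))

/-- with `u, v` hermitian, `∉ Δ`, a symmetric pair `(L,M)` with
`u·L = v·M` and associated LST `F·L = G·M + C`, the rational modification `u·L = v·M`
is minimal iff `gcd(L, M, C) = 1` in the Laurent polynomial ring. -/
theorem stmt11 (u v : Func) (hu : IsHermitian u) (hv : IsHermitian v)
    (hud : ¬ InDelta u) (hvd : ¬ InDelta v)
    (L M C : LP) (p : ℤ) (hL : L ≠ 0) (hM : M ≠ 0)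
    (hLs : T p * starLP L = L) (hMs : T p * starLP M = M)
    (hRM : smulF u L = smulF v M)
    (hC : mulS (CS u) L = (fun n => mulS (CS v) M n + coeF C n)) :
    (∀ L₁ M₁ : LP, L₁ ≠ 0 → M₁ ≠ 0 → smulF u L₁ = smulF v M₁ →
      ∃ N : LP, L₁ = N * L ∧ M₁ = N * M) ↔
    (∀ D : LP, D ∣ L → D ∣ M → D ∣ C → IsUnit D) :=
  stmt11_general u v hu hv hud L M C hL hM hRM hC
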